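/- arXiv:1110.4154 — 4 statements merged into one kernel-verified Lean document; each statement's English description precedes it below -/
import Mathlib

section
/- If U and V are ultrafilters on ω with V ≤_T U (there exists a cofinal map from (U, ⊇) to (V, ⊇)), then there exists a monotone cofinal map f : U → V, i.e., a map such that X ⊇ Y implies f(X) ⊇ f(Y), whose image of every cofinal subset of U is cofinal in V. -/
/-!
Replace a cofinal map `f` by `X ↦ ⋃ {f Y | Y ∈ U, Y ⊆ X}`, which is monotone by construction and
still sends `U` into `V` since it only enlarges `f`. It stays cofinal: for `B ∈ V` the members `Y`
of `U` with `f Y ⊈ B` cannot be cofinal in `U`, so some `A ∈ U` has `f Y ⊆ B` for all `Y ∈ U`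
below it, and then the new map sends every subset of `A` into `B`.
-/

/-- `D` is a cofinal subset of the ultrafilter `U` ordered by reverse inclusion. -/
def IsCofinalIn (U : Ultrafilter ℕ) (D : Set (Set ℕ)) : Prop :=
  (∀ X ∈ D, X ∈ U) ∧ ∀ A ∈ U, ∃ X ∈ D, X ⊆ A

/-- `f` is a cofinal map from `(U, ⊇)` to `(V, ⊇)`. -/
def CofMapUF (U V : Ultrafilter ℕ) (f : Set ℕ → Set ℕ) : Prop :=
  (∀ A ∈ U, f A ∈ V) ∧ ∀ D, IsCofinalIn U D → ∀ B ∈ V, ∃ X ∈ D, f X ⊆ B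

/-- `f` is monotone with respect to reverse inclusion on members of `U`. -/
def MonotoneUF (U : Ultrafilter ℕ) (f : Set ℕ → Set ℕ) : Prop :=
  ∀ A B, A ∈ U → B ∈ U → B ⊆ A → f B ⊆ f A

def monotoneEnvelope (U : Ultrafilter ℕ) (f : Set ℕ → Set ℕ) (X : Set ℕ) : Set ℕ :=
  ⋃ Y ∈ {Y : Set ℕ | Y ∈ U ∧ Y ⊆ X}, f Y

section

variable {U V : Ultrafilter ℕ} {f : Set ℕ → Set ℕ}

theorem subset_monotoneEnvelope {A : Set ℕ} (hA : A ∈ U) : f A ⊆ monotoneEnvelope U f A :=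
  Set.subset_biUnion_of_mem (u := f) ⟨hA, subset_rfl⟩

theorem monotone_monotoneEnvelope : Monotone (monotoneEnvelope U f) :=
  fun _ _ hXZ => Set.biUnion_mono (fun _ hY => ⟨hY.1, hY.2.trans hXZ⟩) fun _ _ => subset_rfl

theorem monotoneUF_monotoneEnvelope : MonotoneUF U (monotoneEnvelope U f) :=
  fun _ _ _ _ hBA => monotone_monotoneEnvelope hBA

theorem CofMapUF.exists_mem_forall_subset_image_subset (hf : CofMapUF U V f) {B : Set ℕ}
    (hB : B ∈ V) : ∃ A ∈ U, ∀ Y ∈ U, Y ⊆ A → f Y ⊆ B := by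
  by_contra! hbad
  have hcof : IsCofinalIn U {Y | Y ∈ U ∧ ¬f Y ⊆ B} :=
    ⟨fun _ hY => hY.1, fun A hA => by
      obtain ⟨Y, hY, hYA, hfY⟩ := hbad A hA
      exact ⟨Y, ⟨hY, hfY⟩, hYA⟩⟩
  obtain ⟨X, hX, hfX⟩ := hf.2 _ hcof B hB
  exact hX.2 hfX

theorem CofMapUF.monotoneEnvelope (hf : CofMapUF U V f) :
    CofMapUF U V (monotoneEnvelope U f) := by
  refine ⟨fun A hA => V.mem_of_superset (hf.1 A hA) (subset_monotoneEnvelope hA), ?_⟩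
  intro D hD B hB
  obtain ⟨A, hA, hAB⟩ := hf.exists_mem_forall_subset_image_subset hB
  obtain ⟨X, hXD, hXA⟩ := hD.2 A hA
  exact ⟨X, hXD, Set.iUnion₂_subset fun Y hY => hAB Y hY.1 (hY.2.trans hXA)⟩

end

theorem stmt2 (U V : Ultrafilter ℕ) (h : ∃ f : Set ℕ → Set ℕ, CofMapUF U V f) :
    ∃ f : Set ℕ → Set ℕ, CofMapUF U V f ∧ MonotoneUF U f := by
  obtain ⟨f, hf⟩ := h
  exact ⟨monotoneEnvelope U f, hf.monotoneEnvelope, monotoneUF_monotoneEnvelope⟩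
end

section
/- Extension of monotone cofinal maps along a cofinal subset: let U and V be ultrafilters on ω, f : U → V a monotone cofinal map, and D ⊆ U cofinal. Define f'(A) = ⋃{f(X) : X ∈ D, X ⊆ A} for A ∈ U. Then f' : U → V is a monotone cofinal map and f' agrees with f on D. -/
/-- Monotone cofinal map from `(U, ⊇)` to `(V, ⊇)`. -/
def MonCofMap (U V : Ultrafilter ℕ) (f : Set ℕ → Set ℕ) : Prop :=
  (∀ A ∈ U, f A ∈ V) ∧
  (∀ A B : Set ℕ, A ∈ U → B ∈ U → A ⊆ B → f A ⊆ f B) ∧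
  ∀ D, IsCofinalIn U D → ∀ B ∈ V, ∃ X ∈ D, f X ⊆ B

section ExtendAlong

variable {α β : Type*} {D : Set (Set α)} {f : Set α → Set β} {A X : Set α}

def extendAlong (D : Set (Set α)) (f : Set α → Set β) (A : Set α) : Set β :=
  ⋃₀ {S | ∃ X ∈ D, X ⊆ A ∧ S = f X}

theorem extendAlong_mono (D : Set (Set α)) (f : Set α → Set β) : Monotone (extendAlong D f) := by
  rintro A B hAB b ⟨_, ⟨X, hXD, hXA, rfl⟩, hb⟩
  exact ⟨f X, ⟨X, hXD, hXA.trans hAB, rfl⟩, hb⟩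

theorem subset_extendAlong (hXD : X ∈ D) (hXA : X ⊆ A) : f X ⊆ extendAlong D f A :=
  Set.subset_sUnion_of_mem ⟨X, hXD, hXA, rfl⟩

theorem extendAlong_subset (h : ∀ X ∈ D, X ⊆ A → f X ⊆ f A) : extendAlong D f A ⊆ f A :=
  Set.sUnion_subset <| by
    rintro _ ⟨X, hXD, hXA, rfl⟩
    exact h X hXD hXA

end ExtendAlong

namespace MonCofMap

variable {U V : Ultrafilter ℕ} {f : Set ℕ → Set ℕ} {D : Set (Set ℕ)}

theorem extendAlong_subset (hf : MonCofMap U V f) (hD : IsCofinalIn U D) {A : Set ℕ}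
    (hA : A ∈ U) : extendAlong D f A ⊆ f A :=
  _root_.extendAlong_subset fun X hXD hXA => hf.2.1 X A (hD.1 X hXD) hA hXA

theorem extendAlong_eq (hf : MonCofMap U V f) (hD : IsCofinalIn U D) {X : Set ℕ}
    (hXD : X ∈ D) : extendAlong D f X = f X :=
  (hf.extendAlong_subset hD (hD.1 X hXD)).antisymm (subset_extendAlong hXD subset_rfl)

theorem extendAlong (hf : MonCofMap U V f) (hD : IsCofinalIn U D) :
    MonCofMap U V (extendAlong D f) := by
  refine ⟨fun A hA => ?_, fun A B _ _ hAB => extendAlong_mono D f hAB, fun E hE B hB => ?_⟩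
  · obtain ⟨X, hXD, hXA⟩ := hD.2 A hA
    exact Filter.mem_of_superset (hf.1 X (hD.1 X hXD)) (subset_extendAlong hXD hXA)
  · obtain ⟨X, hXE, hXB⟩ := hf.2.2 E hE B hB
    exact ⟨X, hXE, (hf.extendAlong_subset hD (hE.1 X hXE)).trans hXB⟩

end MonCofMap

theorem stmt9 (U V : Ultrafilter ℕ) (f : Set ℕ → Set ℕ) (hf : MonCofMap U V f)
    (D : Set (Set ℕ)) (hD : IsCofinalIn U D) :
    MonCofMap U V (fun A => ⋃₀ {S | ∃ X ∈ D, X ⊆ A ∧ S = f X}) ∧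
    ∀ X ∈ D, (⋃₀ {S | ∃ Y ∈ D, Y ⊆ X ∧ S = f Y}) = f X :=
  ⟨hf.extendAlong hD, fun _ hXD => hf.extendAlong_eq hD hXD⟩
end

section
/- Compactness argument for stabilization: let D̄ ⊆ P(ω) be closed (hence compact in the Cantor topology), let f̃, g̃ : P(ω) → P(ω) be continuous, let Ȳ = f̃''D̄, and let Y ∈ Ȳ. Then for each m̃ < ω there exists m ≥ m̃ such that for every Z ∈ D̄ with f̃(Z) ∩ m = Y ∩ m, there exists X ∈ D̄ with f̃(X) = Y and g̃(X) ∩ m̃ = g̃(Z) ∩ m̃. -/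
/-!
Split the values `g̃(Z) ∩ m̃` into the finitely many possible traces `s ⊆ m̃`. For each `s`,
the set `D̄ₛ = {Z ∈ D̄ | g̃(Z) ∩ m̃ = s}` is closed, so by compactness `f̃ '' D̄ₛ` is closed.
If `Y ∈ f̃ '' D̄ₛ` there is nothing to do for `s`; otherwise some cylinder around `Y` misses
`f̃ '' D̄ₛ`, and the required `m` is the largest of these finitely many cylinder lengths.
-/

open Set

/-- Continuity on `D ⊆ P(ω)` with respect to the Cantor topology. -/
def CtsOn (D : Set (Set ℕ)) (f : Set ℕ → Set ℕ) : Prop :=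
  ∀ X ∈ D, ∀ m : ℕ, ∃ n : ℕ, ∀ Y ∈ D, Y ∩ Iio n = X ∩ Iio n →
    f Y ∩ Iio m = f X ∩ Iio m

/-- `D` is closed in `P(ω)` with the Cantor topology. -/
def IsClosedSets (D : Set (Set ℕ)) : Prop :=
  ∀ X : Set ℕ, (∀ n : ℕ, ∃ Y ∈ D, Y ∩ Iio n = X ∩ Iio n) → X ∈ D

open Filter

lemma inter_Iio_eq_of_le {A B : Set ℕ} {n m : ℕ} (h : n ≤ m)
    (hAB : A ∩ Iio m = B ∩ Iio m) : A ∩ Iio n = B ∩ Iio n := by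
  have hsub : Iio m ∩ Iio n = Iio n := inter_eq_right.2 (Iio_subset_Iio h)
  rw [← hsub, ← inter_assoc, hAB, inter_assoc]

lemma eq_of_forall_inter_Iio_eq {A B : Set ℕ} (h : ∀ n, A ∩ Iio n = B ∩ Iio n) : A = B := by
  ext k
  have hk := congrArg (k ∈ ·) (h (k + 1))
  simpa using hk

/-- `{k | ∀ᶠ j in U, k ∈ Z j}` is the limit of `Z` along `U`; this is the compactness of `P(ω)`. -/
lemma Ultrafilter.eventually_inter_Iio_eq {ι : Type*} (U : Ultrafilter ι) (Z : ι → Set ℕ)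
    (n : ℕ) :
    ∀ᶠ j in (U : Filter ι), Z j ∩ Iio n = {k | ∀ᶠ j in (U : Filter ι), k ∈ Z j} ∩ Iio n := by
  have hmem : ∀ k ∈ Iio n,
      ∀ᶠ j in (U : Filter ι), (k ∈ Z j ↔ ∀ᶠ i in (U : Filter ι), k ∈ Z i) := by
    intro k _
    rcases U.em (k ∈ Z ·) with hk | hk
    · filter_upwards [hk] with j hj using iff_of_true hj hk
    · filter_upwards [hk] with j hj using iff_of_false hj (Ultrafilter.eventually_not.1 hk)
  filter_upwards [(finite_Iio n).eventually_all.2 hmem] with j hj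
  ext k
  exact ⟨fun hk => ⟨(hj k hk.2).1 hk.1, hk.2⟩, fun hk => ⟨(hj k hk.2).2 hk.1, hk.2⟩⟩

lemma CtsOn.mono {D D' : Set (Set ℕ)} {f : Set ℕ → Set ℕ} (hf : CtsOn D f) (h : D' ⊆ D) :
    CtsOn D' f := fun X hX m =>
  (hf X (h hX) m).imp fun _ hn Y hY => hn Y (h hY)

lemma CtsOn.eventually_inter_Iio_eq {ι : Type*} {l : Filter ι} {D : Set (Set ℕ)}
    {f : Set ℕ → Set ℕ} (hf : CtsOn D f) {Z : ι → Set ℕ} {X : Set ℕ} (hX : X ∈ D)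
    (hZ : ∀ᶠ j in l, Z j ∈ D) (hlim : ∀ n, ∀ᶠ j in l, Z j ∩ Iio n = X ∩ Iio n) (m : ℕ) :
    ∀ᶠ j in l, f (Z j) ∩ Iio m = f X ∩ Iio m := by
  obtain ⟨n, hn⟩ := hf X hX m
  filter_upwards [hZ, hlim n] with j hjD hj using hn (Z j) hjD hj

lemma IsClosedSets.sep_inter_Iio_eq {D : Set (Set ℕ)} {g : Set ℕ → Set ℕ} (hD : IsClosedSets D)
    (hg : CtsOn D g) (m : ℕ) (s : Set ℕ) : IsClosedSets {Z ∈ D | g Z ∩ Iio m = s} := by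
  intro X hX
  have hXD : X ∈ D := hD X fun n => (hX n).imp fun _ ⟨hY, hYX⟩ => ⟨hY.1, hYX⟩
  obtain ⟨n, hn⟩ := hg X hXD m
  obtain ⟨Y, ⟨hYD, hYs⟩, hYX⟩ := hX n
  exact ⟨hXD, (hn Y hYD hYX).symm.trans hYs⟩

lemma IsClosedSets.image {D : Set (Set ℕ)} {f : Set ℕ → Set ℕ} (hD : IsClosedSets D)
    (hf : CtsOn D f) : IsClosedSets (f '' D) := by
  intro Y hY
  choose W hW using hY
  choose Z hZD hZW using fun n => (hW n).1
  let U : Ultrafilter ℕ := Ultrafilter.of atTop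
  set X : Set ℕ := {k | ∀ᶠ j in (U : Filter ℕ), k ∈ Z j}
  have hlim : ∀ n, ∀ᶠ j in (U : Filter ℕ), Z j ∩ Iio n = X ∩ Iio n :=
    U.eventually_inter_Iio_eq Z
  have hXD : X ∈ D := hD X fun n => (hlim n).exists.elim fun j hj => ⟨Z j, hZD j, hj⟩
  refine ⟨X, hXD, eq_of_forall_inter_Iio_eq fun m => ?_⟩
  have hge : ∀ᶠ j in (U : Filter ℕ), m ≤ j := Ultrafilter.of_le atTop (eventually_ge_atTop m)
  obtain ⟨j, hfX, hjm⟩ :=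
    ((hf.eventually_inter_Iio_eq hXD (Eventually.of_forall hZD) hlim m).and hge).exists
  rw [← hfX, hZW j]
  exact inter_Iio_eq_of_le hjm (hW j).2

lemma IsClosedSets.eventually_inter_Iio_ne {D : Set (Set ℕ)} (hD : IsClosedSets D) {Y : Set ℕ}
    (hY : Y ∉ D) : ∀ᶠ n in atTop, ∀ Z ∈ D, Z ∩ Iio n ≠ Y ∩ Iio n := by
  obtain ⟨n₀, hn₀⟩ : ∃ n₀, ∀ Z ∈ D, Z ∩ Iio n₀ ≠ Y ∩ Iio n₀ := by
    by_contra! h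
    exact hY (hD Y h)
  filter_upwards [eventually_ge_atTop n₀] with n hn Z hZ hZY
  exact hn₀ Z hZ (inter_Iio_eq_of_le hn hZY)

lemma eventually_exists_of_inter_Iio_eq {D : Set (Set ℕ)} {f g : Set ℕ → Set ℕ}
    (hD : IsClosedSets D) (hf : CtsOn D f) (hg : CtsOn D g) (Y : Set ℕ) (m : ℕ) (s : Set ℕ) :
    ∀ᶠ n in atTop, ∀ Z ∈ D, f Z ∩ Iio n = Y ∩ Iio n → g Z ∩ Iio m = s →
      ∃ X ∈ D, f X = Y ∧ g X ∩ Iio m = s := by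
  by_cases hY : Y ∈ f '' {Z ∈ D | g Z ∩ Iio m = s}
  · obtain ⟨X, ⟨hXD, hXs⟩, hXY⟩ := hY
    exact Eventually.of_forall fun _ _ _ _ _ => ⟨X, hXD, hXY, hXs⟩
  · have hclosed := (hD.sep_inter_Iio_eq hg m s).image (hf.mono (sep_subset _ _))
    filter_upwards [hclosed.eventually_inter_Iio_ne hY] with n hn Z hZ hZY hZs
    exact absurd hZY (hn (f Z) ⟨Z, ⟨hZ, hZs⟩, rfl⟩)

theorem stmt11_general (Dbar : Set (Set ℕ)) (ft gt : Set ℕ → Set ℕ)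
    (hD : IsClosedSets Dbar) (hf : CtsOn univ ft) (hg : CtsOn univ gt)
    (Y : Set ℕ) (mt : ℕ) :
    ∃ m ≥ mt, ∀ Z ∈ Dbar, ft Z ∩ Iio m = Y ∩ Iio m →
      ∃ X ∈ Dbar, ft X = Y ∧ gt X ∩ Iio mt = gt Z ∩ Iio mt := by
  have hall : ∀ᶠ n in atTop, ∀ s ∈ 𝒫 Iio mt, ∀ Z ∈ Dbar, ft Z ∩ Iio n = Y ∩ Iio n →
      gt Z ∩ Iio mt = s → ∃ X ∈ Dbar, ft X = Y ∧ gt X ∩ Iio mt = s :=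
    (finite_Iio mt).powerset.eventually_all.2 fun s _ =>
      eventually_exists_of_inter_Iio_eq hD (hf.mono (subset_univ _)) (hg.mono (subset_univ _))
        Y mt s
  obtain ⟨m, hm, hmt⟩ := (hall.and (eventually_ge_atTop mt)).exists
  exact ⟨m, hmt, fun Z hZ hZY => hm _ inter_subset_right Z hZ hZY rfl⟩

theorem stmt11 (Dbar : Set (Set ℕ)) (ft gt : Set ℕ → Set ℕ)
    (hD : IsClosedSets Dbar) (hf : CtsOn univ ft) (hg : CtsOn univ gt)
    (Y : Set ℕ) (hY : Y ∈ ft '' Dbar) (mt : ℕ) :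
    ∃ m ≥ mt, ∀ Z ∈ Dbar, ft Z ∩ Iio m = Y ∩ Iio m →
      ∃ X ∈ Dbar, ft X = Y ∧ gt X ∩ Iio mt = gt Z ∩ Iio mt :=
  stmt11_general Dbar ft gt hD hf hg Y mt
end

section
/- Every ultrafilter supporting continuous cofinal maps has Tukey type of cardinality continuum: if U is an ultrafilter on ω such that for every V ≤_T U there is a continuous monotone cofinal map f : U → V, then the set of ultrafilters Tukey-equivalent to U has cardinality at most 𝔠 (the cardinality of the continuum). -/
open Set

/-- `V ≤_T U`. -/
def TukeyLEU (V U : Ultrafilter ℕ) : Prop := ∃ f : Set ℕ → Set ℕ, CofMapUF U V f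

/-!
A cofinal map `f : U → V` determines `V`, which is the filter generated by the image of `U`.
A continuous map on `U` is in turn determined by the countable set of triples `(m, n, t)` such
that every `Y ∈ U` with `Y ∩ [0, n) = t` has `m ∈ f Y`. Hence the ultrafilters below `U` that are
targets of continuous cofinal maps inject into `𝒫(ℕ × ℕ × Finset ℕ)`, a set of size `𝔠`.
-/

theorem CofMapUF.mem_iff {U V : Ultrafilter ℕ} {f : Set ℕ → Set ℕ} (hf : CofMapUF U V f)
    (B : Set ℕ) : B ∈ V ↔ ∃ X ∈ U, f X ⊆ B := by
  constructor
  · intro hB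
    exact hf.2 {A | A ∈ U} ⟨fun _ hX => hX, fun A hA => ⟨A, hA, subset_rfl⟩⟩ B hB
  · rintro ⟨X, hX, hXB⟩
    exact Filter.mem_of_superset (hf.1 X hX) hXB

theorem CofMapUF.eq_of_eqOn {U V W : Ultrafilter ℕ} {f g : Set ℕ → Set ℕ}
    (hf : CofMapUF U V f) (hg : CofMapUF U W g) (hfg : EqOn f g {A | A ∈ U}) : V = W := by
  ext B
  rw [hf.mem_iff, hg.mem_iff]
  exact exists_congr fun X => and_congr_right fun hX => by rw [hfg hX]

def ctsCode (D : Set (Set ℕ)) (f : Set ℕ → Set ℕ) : Set (ℕ × ℕ × Finset ℕ) :=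
  {p | ∀ Y ∈ D, Y ∩ Iio p.2.1 = ↑p.2.2 → p.1 ∈ f Y}

theorem CtsOn.mem_iff_exists_ctsCode {D : Set (Set ℕ)} {f : Set ℕ → Set ℕ} (hf : CtsOn D f)
    {X : Set ℕ} (hX : X ∈ D) (m : ℕ) :
    m ∈ f X ↔ ∃ n t, (m, n, t) ∈ ctsCode D f ∧ X ∩ Iio n = ↑t := by
  constructor
  · intro hm
    obtain ⟨n, hn⟩ := hf X hX (m + 1)
    have hfin : (X ∩ Iio n).Finite := (finite_Iio n).inter_of_right X
    refine ⟨n, hfin.toFinset, fun Y hY hYX => ?_, hfin.coe_toFinset.symm⟩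
    have hmY : m ∈ f Y ∩ Iio (m + 1) := by
      rw [hn Y hY (hYX.trans hfin.coe_toFinset)]
      exact ⟨hm, Nat.lt_succ_self m⟩
    exact hmY.1
  · rintro ⟨n, t, hcode, hXt⟩
    exact hcode X hX hXt

theorem CtsOn.eqOn_of_ctsCode_eq {D : Set (Set ℕ)} {f g : Set ℕ → Set ℕ} (hf : CtsOn D f)
    (hg : CtsOn D g) (hfg : ctsCode D f = ctsCode D g) : EqOn f g D := by
  intro X hX
  ext m
  rw [hf.mem_iff_exists_ctsCode hX, hg.mem_iff_exists_ctsCode hX, hfg]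

theorem mk_le_continuum_of_forall_ctsOn_cofMapUF (U : Ultrafilter ℕ) (S : Set (Ultrafilter ℕ))
    (hS : ∀ W ∈ S, ∃ f, CofMapUF U W f ∧ CtsOn {A | A ∈ U} f) :
    Cardinal.mk S ≤ Cardinal.continuum := by
  choose f hcof hcts using fun W : S => hS W W.2
  have hinj : Function.Injective fun W : S => ctsCode {A | A ∈ U} (f W) := fun W₁ W₂ hcode =>
    Subtype.ext <| (hcof W₁).eq_of_eqOn (hcof W₂) <| (hcts W₁).eqOn_of_ctsCode_eq (hcts W₂) hcode
  calc Cardinal.mk S ≤ Cardinal.mk (Set (ℕ × ℕ × Finset ℕ)) := Cardinal.mk_le_of_injective hinj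
    _ = Cardinal.continuum := by
      rw [Cardinal.mk_set, Cardinal.mk_eq_aleph0, Cardinal.two_power_aleph0]

theorem stmt15 (U : Ultrafilter ℕ)
    (hU : ∀ V : Ultrafilter ℕ, TukeyLEU V U →
      ∃ f : Set ℕ → Set ℕ, CofMapUF U V f ∧
        (∀ A B : Set ℕ, A ∈ U → B ∈ U → A ⊆ B → f A ⊆ f B) ∧
        CtsOn {A : Set ℕ | A ∈ U} f) :
    Cardinal.mk {W : Ultrafilter ℕ | TukeyLEU W U ∧ TukeyLEU U W} ≤ Cardinal.continuum := by
  refine mk_le_continuum_of_forall_ctsOn_cofMapUF U _ fun W hW => ?_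
  obtain ⟨f, hcof, -, hcts⟩ := hU W hW.1
  exact ⟨f, hcof, hcts⟩
end
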